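/- arXiv:1510.03472 — 5 statements merged into one kernel-verified Lean document; each statement's English description precedes it below -/
import Mathlib

section
/- Let M be a von Neumann algebra acting on a complex Hilbert space H and let a ∈ M be a positive injective bounded operator. Then the set {√a x √a : x ∈ M} is dense in M for the weak operator topology, i.e. every y ∈ M lies in the WOT-closure of {√a x √a : x ∈ M}; moreover, every selfadjoint y ∈ M lies in the WOT-closure of {√a x √a : x ∈ M, x selfadjoint}. -/
/-!
With `b = √a`, the operators `c ε = (b + ε)⁻¹` (functional calculus) lie in `M`, and
`√a (c ε y c ε) √a = g ε y g ε` for `g ε = b (b + ε)⁻¹`. These `g ε` are contractions with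
`‖g ε b - b‖ ≤ ε`; since `a` is injective, `b` has dense range, so `g ε → 1` strongly, hence
`g ε y g ε → y` strongly and a fortiori in the weak operator topology. Conjugation by the
selfadjoint `c ε` preserves selfadjointness.
-/

open Filter Topology NNReal

section CStarAlgebra

variable {A : Type*} [CStarAlgebra A] [PartialOrder A] [StarOrderedRing A] {b : A}

lemma div_add_le_one {t ε : ℝ} (ht : 0 ≤ t) (hε : 0 ≤ ε) : t / (t + ε) ≤ 1 :=
  div_le_one_of_le₀ (le_add_of_nonneg_right hε) (by positivity)

lemma norm_cfc_div_add_le_one (hb : 0 ≤ b) (ε : ℝ≥0) :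
    ‖cfc (fun t : ℝ => t / (t + ε)) b‖ ≤ 1 := by
  refine norm_cfc_le zero_le_one fun t ht => ?_
  have ht : 0 ≤ t := spectrum_nonneg_of_nonneg hb ht
  rw [Real.norm_of_nonneg (by positivity)]
  exact div_add_le_one ht ε.2

lemma norm_cfc_div_add_mul_sub_le (hb : 0 ≤ b) {ε : ℝ≥0} (hε : 0 < ε) :
    ‖cfc (fun t : ℝ => t / (t + ε)) b * b - b‖ ≤ ε := by
  have hcont : ContinuousOn (fun t : ℝ => t / (t + ε)) (spectrum ℝ b) :=
    continuousOn_id.div (by fun_prop) fun t ht =>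
      (add_pos_of_nonneg_of_pos (spectrum_nonneg_of_nonneg hb ht) hε).ne'
  nth_rw 2 [← cfc_id' ℝ b]
  nth_rw 3 [← cfc_id' ℝ b]
  rw [← cfc_mul .., ← cfc_sub ..]
  refine norm_cfc_le ε.2 fun t ht => ?_
  have ht : 0 ≤ t := spectrum_nonneg_of_nonneg hb ht
  have hε' : (0 : ℝ) < ε := hε
  have : t / (t + ε) * t - t = -(ε * (t / (t + ε))) := by field_simp; ring
  rw [this, norm_neg, Real.norm_of_nonneg (by positivity)]
  exact mul_le_of_le_one_right ε.2 (div_add_le_one ht ε.2)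

lemma tendsto_cfc_div_add_mul (hb : 0 ≤ b) :
    Tendsto (fun ε : ℝ≥0 => cfc (fun t : ℝ => t / (t + ε)) b * b) (𝓝[>] 0) (𝓝 b) := by
  rw [tendsto_iff_norm_sub_tendsto_zero]
  refine squeeze_zero' (g := fun ε : ℝ≥0 => (ε : ℝ)) (.of_forall fun _ => norm_nonneg _) ?_ ?_
  · filter_upwards [self_mem_nhdsWithin] with ε hε using norm_cfc_div_add_mul_sub_le hb hε
  · exact (NNReal.continuous_coe.tendsto' 0 0 rfl).mono_left nhdsWithin_le_nhds

lemma mul_cfc_inv_add (hb : 0 ≤ b) {ε : ℝ} (hε : 0 < ε) :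
    b * cfc (fun t : ℝ => (t + ε)⁻¹) b = cfc (fun t : ℝ => t / (t + ε)) b := by
  have hcont : ContinuousOn (fun t : ℝ => (t + ε)⁻¹) (spectrum ℝ b) :=
    ContinuousOn.inv₀ (by fun_prop) fun t ht =>
      (add_pos_of_nonneg_of_pos (spectrum_nonneg_of_nonneg hb ht) hε).ne'
  nth_rw 1 [← cfc_id' ℝ b]
  rw [← cfc_mul ..]
  exact cfc_congr fun t _ => (div_eq_mul_inv t _).symm

end CStarAlgebra

lemma ContinuousLinearMap.IsStarNormal.denseRange_of_injective {𝕜 E : Type*} [RCLike 𝕜]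
    [NormedAddCommGroup E] [InnerProductSpace 𝕜 E] [CompleteSpace E] {T : E →L[𝕜] E}
    (hT : IsStarNormal T) (hinj : Function.Injective T) : DenseRange T := by
  have : T.range.topologicalClosure = ⊤ := by
    rw [Submodule.topologicalClosure_eq_top_iff,
      ContinuousLinearMap.IsStarNormal.orthogonal_range hT]
    exact LinearMap.ker_eq_bot.mpr hinj
  exact Submodule.dense_iff_topologicalClosure_eq_top.mpr this

lemma ContinuousLinearMapWOT.tendsto_ofCLM_of_tendsto_apply {𝕜 E F ι : Type*} [NormedField 𝕜]
    [AddCommGroup E] [TopologicalSpace E] [Module 𝕜 E] [AddCommGroup F] [TopologicalSpace F]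
    [Module 𝕜 F] [IsTopologicalAddGroup F] [ContinuousConstSMul 𝕜 F] {l : Filter ι}
    {f : ι → E →L[𝕜] F} {f₀ : E →L[𝕜] F} (h : ∀ v, Tendsto (fun i => f i v) l (𝓝 (f₀ v))) :
    Tendsto (fun i => ofCLM (f i)) l (𝓝 (ofCLM f₀)) := by
  rw [tendsto_iff_forall_dual_apply_tendsto]
  exact fun v ψ => (ψ.continuous.tendsto _).comp (h v)

section NormedSpace

variable {𝕜 E ι : Type*} [NontriviallyNormedField 𝕜] [NormedAddCommGroup E] [NormedSpace 𝕜 E]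
  {l : Filter ι}

lemma tendsto_apply_of_tendsto_mul_of_denseRange {b : E →L[𝕜] E} (hb : DenseRange b)
    {g : ι → E →L[𝕜] E} {C : ℝ} (hg : ∀ i, ‖g i‖ ≤ C) (hgb : Tendsto (fun i => g i * b) l (𝓝 b))
    (v : E) : Tendsto (fun i => g i v) l (𝓝 v) := by
  have hequi : Equicontinuous fun i => (g i : E → E) :=
    ((NormedSpace.equicontinuous_TFAE g).out 5 1).mp (⟨C, hg⟩ : ∃ C, ∀ i, ‖g i‖ ≤ C)
  refine hb.induction_on v (hequi.isClosed_setOfPred_tendsto continuous_id) fun w => ?_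
  exact ((ContinuousLinearMap.apply 𝕜 E w).continuous.tendsto b).comp hgb

lemma tendsto_apply_apply_of_norm_le {g : ι → E →L[𝕜] E} {C : ℝ} (hg : ∀ i, ‖g i‖ ≤ C)
    {g₀ : E →L[𝕜] E} (hg₀ : ∀ v, Tendsto (fun i => g i v) l (𝓝 (g₀ v))) {u : ι → E} {u₀ : E}
    (hu : Tendsto u l (𝓝 u₀)) : Tendsto (fun i => g i (u i)) l (𝓝 (g₀ u₀)) := by
  have hsmall : Tendsto (fun i => g i (u i - u₀)) l (𝓝 0) :=
    squeeze_zero_norm (fun i => (g i).le_of_opNorm_le (hg i) _)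
      (by simpa using (tendsto_iff_norm_sub_tendsto_zero.mp hu).const_mul C)
  simpa using hsmall.add (hg₀ u₀)

lemma tendsto_ofCLM_mul_mul_of_tendsto_mul_of_denseRange {b : E →L[𝕜] E} (hb : DenseRange b)
    {g : ι → E →L[𝕜] E} {C : ℝ} (hg : ∀ i, ‖g i‖ ≤ C) (hgb : Tendsto (fun i => g i * b) l (𝓝 b))
    (y : E →L[𝕜] E) :
    Tendsto (fun i => ContinuousLinearMapWOT.ofCLM (g i * y * g i)) l
      (𝓝 (ContinuousLinearMapWOT.ofCLM y)) := by
  have hg₁ := tendsto_apply_of_tendsto_mul_of_denseRange hb hg hgb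
  refine ContinuousLinearMapWOT.tendsto_ofCLM_of_tendsto_apply fun v => ?_
  simpa using tendsto_apply_apply_of_norm_le hg (g₀ := 1) (by simpa using hg₁)
    ((y.continuous.tendsto v).comp (hg₁ v))

end NormedSpace

section VonNeumannAlgebra

variable {H : Type*} [NormedAddCommGroup H] [InnerProductSpace ℂ H] [CompleteSpace H]

lemma VonNeumannAlgebra.isClosed (M : VonNeumannAlgebra H) :
    IsClosed (M : Set (H →L[ℂ] H)) :=
  M.centralizer_centralizer ▸ Set.isClosed_centralizer _

lemma VonNeumannAlgebra.cfc_mem {M : VonNeumannAlgebra H} (f : ℝ → ℝ) {a : H →L[ℂ] H}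
    (ha : a ∈ M) : cfc f a ∈ M :=
  _root_.cfc_mem (s := M.toStarSubalgebra) (hs := M.isClosed) f ha

lemma VonNeumannAlgebra.sqrt_mem {M : VonNeumannAlgebra H} {a : H →L[ℂ] H} (haM : a ∈ M)
    (ha : 0 ≤ a) : CFC.sqrt a ∈ M := by
  rw [CFC.sqrt_eq_real_sqrt a, cfcₙ_eq_cfc]
  exact VonNeumannAlgebra.cfc_mem _ haM

end VonNeumannAlgebra

/-- Let `M` be a von Neumann algebra acting on a complex Hilbert space `H`
and let `a ∈ M` be a positive injective bounded operator.  Then `{√a x √a : x ∈ M}` is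
WOT-dense in `M`, and `{√a x √a : x ∈ M selfadjoint}` is WOT-dense in the selfadjoint
part of `M`. -/
theorem stmt0 (H : Type*) [NormedAddCommGroup H] [InnerProductSpace ℂ H] [CompleteSpace H]
    (M : VonNeumannAlgebra H) (a : H →L[ℂ] H) (haM : a ∈ M) (ha_pos : 0 ≤ a)
    (ha_inj : Function.Injective a) :
    (∀ y : H →L[ℂ] H, y ∈ M →
      (ContinuousLinearMapWOT.ofCLM : (H →L[ℂ] H) → (H →WOT[ℂ] H)) y ∈
        closure ((ContinuousLinearMapWOT.ofCLM : (H →L[ℂ] H) → (H →WOT[ℂ] H)) ''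
          {z : H →L[ℂ] H | ∃ x ∈ M, z = CFC.sqrt a * x * CFC.sqrt a})) ∧
    (∀ y : H →L[ℂ] H, y ∈ M → IsSelfAdjoint y →
      (ContinuousLinearMapWOT.ofCLM : (H →L[ℂ] H) → (H →WOT[ℂ] H)) y ∈
        closure ((ContinuousLinearMapWOT.ofCLM : (H →L[ℂ] H) → (H →WOT[ℂ] H)) ''
          {z : H →L[ℂ] H | ∃ x ∈ M, IsSelfAdjoint x ∧ z = CFC.sqrt a * x * CFC.sqrt a})) := by
  set b := CFC.sqrt a
  have hb : 0 ≤ b := CFC.sqrt_nonneg a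
  have hb_dense : DenseRange b := by
    have hbb : ⇑a = b ∘ b := by rw [← CFC.sqrt_mul_sqrt_self a ha_pos]; rfl
    exact ContinuousLinearMap.IsStarNormal.denseRange_of_injective hb.isSelfAdjoint.isStarNormal
      (hbb ▸ ha_inj).of_comp
  set c : ℝ≥0 → H →L[ℂ] H := fun ε => cfc (fun t : ℝ => (t + ε)⁻¹) b
  set g : ℝ≥0 → H →L[ℂ] H := fun ε => cfc (fun t : ℝ => t / (t + ε)) b
  have hcM : ∀ ε, c ε ∈ M := fun ε => VonNeumannAlgebra.cfc_mem _ (M.sqrt_mem haM ha_pos)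
  have hconj : ∀ᶠ ε in 𝓝[>] 0, ∀ y, b * (c ε * y * c ε) * b = g ε * y * g ε := by
    filter_upwards [self_mem_nhdsWithin] with ε hε y
    have hbc : b * c ε = g ε := mul_cfc_inv_add hb (ε := ε) hε
    have hcomm : Commute b (c ε) := by
      simpa only [cfc_id' ℝ b] using cfc_commute_cfc (fun t : ℝ => t) _ b
    calc b * (c ε * y * c ε) * b = b * c ε * y * (c ε * b) := by simp only [mul_assoc]
      _ = g ε * y * g ε := by rw [← hcomm.eq, hbc]
  have hlim := tendsto_ofCLM_mul_mul_of_tendsto_mul_of_denseRange hb_dense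
    (norm_cfc_div_add_le_one hb) (tendsto_cfc_div_add_mul hb)
  refine ⟨fun y hy => mem_closure_of_tendsto (hlim y) ?_,
    fun y hy hy_sa => mem_closure_of_tendsto (hlim y) ?_⟩
  · filter_upwards [hconj] with ε hε
    exact ⟨_, ⟨c ε * y * c ε, mul_mem (mul_mem (hcM ε) hy) (hcM ε), (hε y).symm⟩, rfl⟩
  · filter_upwards [hconj] with ε hε
    exact ⟨_, ⟨c ε * y * c ε, mul_mem (mul_mem (hcM ε) hy) (hcM ε),
      hy_sa.conjugate_self (cfc_predicate _ b), (hε y).symm⟩, rfl⟩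
end

section
/- Let a ∈ B(H) be positive and injective and let x ∈ B(H) be selfadjoint. Then sInf { λ ∈ ℝ : −λ·a ≤ √a x √a and √a x √a ≤ λ·a } = ‖x‖, where the inequalities are in the Loewner order on B(H). -/
/-!
Since `√a` is selfadjoint and injective, its range is dense, so conjugation by `√a` reflects the
Loewner order on selfadjoint operators. As `√a (r • 1) √a = r • a`, the defining condition of the
set is therefore `-l ≤ x ≤ l`, and for selfadjoint `x` this says exactly `‖x‖ ≤ l`, because `‖x‖`
or `-‖x‖` lies in the spectrum of `x`. Hence the set is `[‖x‖, ∞)`.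
-/

namespace ContinuousLinearMap

variable {𝕜 E F : Type*} [RCLike 𝕜] [NormedAddCommGroup E] [InnerProductSpace 𝕜 E]
  [CompleteSpace E] [NormedAddCommGroup F] [InnerProductSpace 𝕜 F] [CompleteSpace F]

theorem denseRange_of_injective_adjoint {T : E →L[𝕜] F} (h : Function.Injective (adjoint T)) :
    DenseRange T := by
  have h_orth : T.rangeᗮ = ⊥ := by
    rw [orthogonal_range]
    exact LinearMap.ker_eq_bot.mpr h
  simpa [DenseRange, LinearMap.coe_range] using Submodule.dense_iff_topologicalClosure_eq_top.mpr
    (Submodule.topologicalClosure_eq_top_iff.mpr h_orth)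

theorem isPositive_adjoint_conj_iff {T : E →L[𝕜] E} {S : F →L[𝕜] E} (hS : DenseRange S)
    (hT : IsSelfAdjoint T) : (adjoint S ∘L T ∘L S).IsPositive ↔ T.IsPositive := by
  refine ⟨fun h => isPositive_def'.mpr ⟨hT, fun w => ?_⟩, fun h => h.adjoint_conj S⟩
  refine hS.induction_on w (isClosed_le continuous_const T.reApplyInnerSelf_continuous)
    fun v => ?_
  simpa [reApplyInnerSelf_apply, adjoint_inner_left] using h.re_inner_nonneg_left v

theorem adjoint_conj_le_adjoint_conj_iff {A B S : E →L[𝕜] E} (hS : DenseRange S)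
    (hA : IsSelfAdjoint A) (hB : IsSelfAdjoint B) :
    adjoint S * A * S ≤ adjoint S * B * S ↔ A ≤ B := by
  rw [le_def, le_def, ← sub_mul, ← mul_sub, mul_def, mul_def, comp_assoc]
  exact isPositive_adjoint_conj_iff hS (hB.sub hA)

end ContinuousLinearMap

theorem IsSelfAdjoint.mem_Icc_algebraMap_iff_norm_le {A : Type*} [CStarAlgebra A]
    [PartialOrder A] [StarOrderedRing A] [Nontrivial A] {x : A} (hx : IsSelfAdjoint x) {r : ℝ} :
    x ∈ Set.Icc (algebraMap ℝ A (-r)) (algebraMap ℝ A r) ↔ ‖x‖ ≤ r := by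
  rw [Set.mem_Icc, algebraMap_le_iff_le_spectrum hx, le_algebraMap_iff_spectrum_le hx]
  constructor
  · rintro ⟨h_lower, h_upper⟩
    rcases CStarAlgebra.norm_or_neg_norm_mem_spectrum hx with h | h
    · exact h_upper _ h
    · linarith [h_lower _ h]
  · intro h
    have h_abs (t : ℝ) (ht : t ∈ spectrum ℝ x) : |t| ≤ r :=
      (spectrum.norm_le_norm_of_mem ht).trans h
    exact ⟨fun t ht => neg_le_of_abs_le (h_abs t ht), fun t ht => le_of_abs_le (h_abs t ht)⟩

section SqrtConjugation

variable {H : Type*} [NormedAddCommGroup H] [InnerProductSpace ℂ H] [CompleteSpace H]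
  {a : H →L[ℂ] H}

theorem denseRange_sqrt_of_injective (ha_pos : 0 ≤ a) (ha_inj : Function.Injective a) :
    DenseRange ⇑(CFC.sqrt a) := by
  refine ContinuousLinearMap.denseRange_of_injective_adjoint ?_
  rw [(IsSelfAdjoint.of_nonneg (CFC.sqrt_nonneg a)).adjoint_eq]
  have h_inj : Function.Injective (⇑(CFC.sqrt a) ∘ ⇑(CFC.sqrt a)) := by
    rwa [← FunLike.coe_mul_eq_comp, CFC.sqrt_mul_sqrt_self a ha_pos]
  exact h_inj.of_comp

theorem sqrt_mul_algebraMap_mul_sqrt (ha_pos : 0 ≤ a) (r : ℝ) :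
    CFC.sqrt a * algebraMap ℝ (H →L[ℂ] H) r * CFC.sqrt a = r • a := by
  rw [Algebra.algebraMap_eq_smul_one, mul_smul_comm, mul_one, smul_mul_assoc,
    CFC.sqrt_mul_sqrt_self a ha_pos]

theorem sqrt_mul_mul_sqrt_mem_Icc_iff (ha_pos : 0 ≤ a) (ha_inj : Function.Injective a)
    {x : H →L[ℂ] H} (hx : IsSelfAdjoint x) (l : ℝ) :
    CFC.sqrt a * x * CFC.sqrt a ∈ Set.Icc ((-l) • a) (l • a) ↔
      x ∈ Set.Icc (algebraMap ℝ (H →L[ℂ] H) (-l)) (algebraMap ℝ (H →L[ℂ] H) l) := by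
  have h_dense := denseRange_sqrt_of_injective ha_pos ha_inj
  have h_conj_iff {A B : H →L[ℂ] H} :=
    ContinuousLinearMap.adjoint_conj_le_adjoint_conj_iff (A := A) (B := B) h_dense
  rw [(IsSelfAdjoint.of_nonneg (CFC.sqrt_nonneg a)).adjoint_eq] at h_conj_iff
  have h_scalar (r : ℝ) : IsSelfAdjoint (algebraMap ℝ (H →L[ℂ] H) r) := .algebraMap _ (.all r)
  rw [Set.mem_Icc, Set.mem_Icc, ← sqrt_mul_algebraMap_mul_sqrt ha_pos,
    ← sqrt_mul_algebraMap_mul_sqrt ha_pos, h_conj_iff (h_scalar _) hx, h_conj_iff hx (h_scalar _)]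

end SqrtConjugation

/-- For a positive injective `a ∈ B(H)` and a selfadjoint `x ∈ B(H)`,
`sInf { λ : ℝ | -λ·a ≤ √a x √a ≤ λ·a } = ‖x‖` (Loewner order). -/
theorem stmt2 (H : Type*) [NormedAddCommGroup H] [InnerProductSpace ℂ H] [CompleteSpace H]
    (a : H →L[ℂ] H) (ha_pos : 0 ≤ a) (ha_inj : Function.Injective a)
    (x : H →L[ℂ] H) (hx : IsSelfAdjoint x) :
    sInf {l : ℝ | (-l) • a ≤ CFC.sqrt a * x * CFC.sqrt a ∧
        CFC.sqrt a * x * CFC.sqrt a ≤ l • a} = ‖x‖ := by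
  rcases subsingleton_or_nontrivial H with hH | hH
  · -- the set is all of `ℝ`, whose `sInf` is `0` by convention
    have h_set : {l : ℝ | (-l) • a ≤ CFC.sqrt a * x * CFC.sqrt a ∧
        CFC.sqrt a * x * CFC.sqrt a ≤ l • a} = Set.univ :=
      Set.eq_univ_of_forall fun l => ⟨(Subsingleton.elim _ _).le, (Subsingleton.elim _ _).le⟩
    rw [h_set, Real.sInf_univ, Subsingleton.elim x 0, norm_zero]
  · have h_set : {l : ℝ | (-l) • a ≤ CFC.sqrt a * x * CFC.sqrt a ∧
        CFC.sqrt a * x * CFC.sqrt a ≤ l • a} = Set.Ici ‖x‖ := by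
      ext l
      rw [Set.mem_ofPred_eq, ← Set.mem_Icc, sqrt_mul_mul_sqrt_mem_Icc_iff ha_pos ha_inj hx,
        hx.mem_Icc_algebraMap_iff_norm_le, Set.mem_Ici]
    rw [h_set, csInf_Ici]
end

section
/- Let a ∈ B(H) be positive (not necessarily injective), let x ∈ B(H) be selfadjoint, and let K := (ker a)^⊥ with orthogonal projection P_K : H → K and inclusion ι_K : K → H. Then sInf { λ ∈ ℝ : 0 ≤ λ and for all f ∈ H, |Re⟪√a f, x(√a f)⟫| ≤ λ·‖√a f‖² } = ‖P_K ∘ x ∘ ι_K‖, the operator norm of the compression of x to K. -/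
/-!
The compression `c = P_K x ι_K` of the selfadjoint `x` is selfadjoint on `K`, so its norm is the
least `l ≥ 0` with `|Re⟪g, c g⟫| ≤ l‖g‖²` on `K`, and `⟪g, c g⟫ = ⟪g, x g⟫` there. Since `√a` is
selfadjoint with `√a √a = a`, its range is dense in `(ker a)ᗮ = K`; the quadratic bound is a
closed condition, so testing it on the range of `√a` is the same as testing it on `K`. Hence the
set of admissible `l` is the ray `[‖c‖, ∞)`.
-/

open scoped InnerProductSpace

namespace ContinuousLinearMap

variable {𝕜 E : Type*} [RCLike 𝕜] [NormedAddCommGroup E] [InnerProductSpace 𝕜 E]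

theorem opNorm_le_iff_abs_re_inner_self_le {T : E →L[𝕜] E} (hT : (T : E →ₗ[𝕜] E).IsSymmetric)
    {l : ℝ} : ‖T‖ ≤ l ↔ 0 ≤ l ∧ ∀ g, |RCLike.re ⟪g, T g⟫_𝕜| ≤ l * ‖g‖ ^ 2 := by
  rw [T.norm_eq_iSup_rayleighQuotient hT, ciSup_le_iff T.bddAbove_rayleighQuotient]
  refine ⟨fun h ↦ ⟨by simpa using h 0, fun g ↦ ?_⟩, fun ⟨hl, h⟩ g ↦ ?_⟩
  · rcases eq_or_ne g 0 with rfl | hg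
    · simp
    have := h g
    rwa [rayleighQuotient, reApplyInnerSelf_apply, abs_div, abs_sq,
      div_le_iff₀ (by positivity), inner_re_symm] at this
  · rcases eq_or_ne g 0 with rfl | hg
    · simpa using hl
    rw [rayleighQuotient, reApplyInnerSelf_apply, abs_div, abs_sq, div_le_iff₀ (by positivity),
      inner_re_symm]
    exact h g

end ContinuousLinearMap

namespace IsSelfAdjoint

open ContinuousLinearMap

variable {𝕜 E : Type*} [RCLike 𝕜] [NormedAddCommGroup E] [InnerProductSpace 𝕜 E] [CompleteSpace E]

theorem orthogonal_ker_mul_self_eq_topologicalClosure_range {b : E →L[𝕜] E}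
    (hb : IsSelfAdjoint b) :
    (LinearMap.ker ((b * b : E →L[𝕜] E) : E →ₗ[𝕜] E))ᗮ =
      (LinearMap.range (b : E →ₗ[𝕜] E)).topologicalClosure := by
  have hker := b.ker_adjoint_comp_self
  rw [hb.adjoint_eq] at hker
  rw [mul_def, hker, orthogonal_ker, hb.adjoint_eq]

theorem orthogonalProjectionOnto_comp_comp_subtypeL {T : E →L[𝕜] E} (hT : IsSelfAdjoint T)
    (U : Submodule 𝕜 E) [CompleteSpace U] :
    IsSelfAdjoint (U.orthogonalProjectionOnto.comp (T.comp U.subtypeL)) := by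
  rw [← U.adjoint_subtypeL]
  exact hT.adjoint_conj _

theorem norm_compression_le_iff_of_closure_range_eq {α : Type*} {T : E →L[𝕜] E}
    (hT : IsSelfAdjoint T) (U : Submodule 𝕜 E) [CompleteSpace U] {b : α → E}
    (hb : closure (Set.range b) = U) {l : ℝ} :
    ‖U.orthogonalProjectionOnto.comp (T.comp U.subtypeL)‖ ≤ l ↔
      0 ≤ l ∧ ∀ f, |RCLike.re ⟪b f, T (b f)⟫_𝕜| ≤ l * ‖b f‖ ^ 2 := by
  rw [opNorm_le_iff_abs_re_inner_self_le
    (hT.orthogonalProjectionOnto_comp_comp_subtypeL U).isSymmetric]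
  refine and_congr_right fun _ ↦ ?_
  have hclosed : IsClosed {g : E | |RCLike.re ⟪g, T g⟫_𝕜| ≤ l * ‖g‖ ^ 2} :=
    isClosed_le (by fun_prop) (by fun_prop)
  simp only [comp_apply, Submodule.subtypeL_apply,
    Submodule.inner_orthogonalProjectionOnto_eq_of_mem_left, Submodule.coe_norm, Subtype.forall,
    ← SetLike.mem_coe, ← hb]
  exact ⟨fun h f ↦ h _ (subset_closure ⟨f, rfl⟩),
    fun h g hg ↦ hclosed.closure_subset_iff.2 (Set.range_subset_iff.2 h) hg⟩

end IsSelfAdjoint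

/-- For positive `a ∈ B(H)`, selfadjoint `x ∈ B(H)` and `K := (ker a)ᗮ`,
`sInf { λ ≥ 0 | ∀ f, |Re⟪√a f, x (√a f)⟫| ≤ λ‖√a f‖² } = ‖P_K ∘ x ∘ ι_K‖`. -/
theorem stmt4 (H : Type*) [NormedAddCommGroup H] [InnerProductSpace ℂ H] [CompleteSpace H]
    (a : H →L[ℂ] H) (ha_pos : 0 ≤ a) (x : H →L[ℂ] H) (hx : IsSelfAdjoint x) :
    sInf {l : ℝ | 0 ≤ l ∧ ∀ f : H,
        |(⟪CFC.sqrt a f, x (CFC.sqrt a f)⟫_ℂ).re| ≤ l * ‖CFC.sqrt a f‖ ^ 2} =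
      ‖(Submodule.orthogonalProjectionOnto (LinearMap.ker (a : H →ₗ[ℂ] H))ᗮ).comp
          (x.comp (LinearMap.ker (a : H →ₗ[ℂ] H))ᗮ.subtypeL)‖ := by
  have hdense : closure (Set.range (CFC.sqrt a : H →L[ℂ] H)) =
      ((LinearMap.ker (a : H →ₗ[ℂ] H))ᗮ : Set H) := by
    conv_rhs => rw [← CFC.sqrt_mul_sqrt_self a ha_pos]
    rw [(CFC.sqrt_nonneg a).isSelfAdjoint.orthogonal_ker_mul_self_eq_topologicalClosure_range,
      Submodule.topologicalClosure_coe, LinearMap.coe_range, ContinuousLinearMap.coe_coe]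
  have hset : {l : ℝ | 0 ≤ l ∧ ∀ f : H,
      |(⟪CFC.sqrt a f, x (CFC.sqrt a f)⟫_ℂ).re| ≤ l * ‖CFC.sqrt a f‖ ^ 2} = Set.Ici _ :=
    Set.ext fun _ ↦ (hx.norm_compression_le_iff_of_closure_range_eq _ hdense).symm
  rw [hset, csInf_Ici]
end

section
/- Let A be a unital C*-algebra and let a ∈ A with 0 ≤ a. Then the seminorm f ↦ ‖√a·f·√a‖ on the continuous dual of A is a norm (equivalently: √a·f·√a = 0 implies f = 0 for every continuous linear functional f on A) if and only if Re(φ(a)) > 0 for every nonzero positive continuous linear functional φ on A. -/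
set_option synthInstance.maxHeartbeats 1000000
set_option maxHeartbeats 1000000

open scoped ComplexOrder

/-- For `a` in a unital C*-algebra `A` and a continuous linear functional `f` on `A`,
`sandwich a f` is the continuous linear functional `x ↦ f (√a * x * √a)`. -/
noncomputable def sandwich {A : Type*} [CStarAlgebra A] [PartialOrder A] [StarOrderedRing A]
    (a : A) (f : A →L[ℂ] ℂ) : A →L[ℂ] ℂ :=
  f.comp ((ContinuousLinearMap.mul ℂ A (CFC.sqrt a)).comp
    ((ContinuousLinearMap.mul ℂ A).flip (CFC.sqrt a)))

lemma sandwich_apply {A : Type*} [CStarAlgebra A] [PartialOrder A] [StarOrderedRing A]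
    (a : A) (f : A →L[ℂ] ℂ) (x : A) :
    sandwich a f x = f (CFC.sqrt a * x * CFC.sqrt a) := by
  simp [sandwich, mul_assoc]

/-!
If `φ ≥ 0` and `φ a = 0`, the Cauchy–Schwarz inequality for the semi-inner product
`⟪x, y⟫ = φ (x⋆ * y)` gives `φ (√a * x) = 0` for every `x`, so `√a·φ·√a = 0`.
Conversely, `√a·f·√a` determines `f` as soon as `√a`, equivalently `a`, is invertible. If `a` is
not invertible, then `a` lies on the boundary of the convex cone `{y | 0 ≤ ℜ y}`, whose interior
contains `1`; minus a supporting functional of this cone at `a` is a nonzero positive functional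
with `Re φ(a) ≤ 0`.
-/

open scoped ComplexStarModule

lemma PositiveLinearMap.apply_star_mul_eq_zero {A : Type*} [NonUnitalCStarAlgebra A]
    [PartialOrder A] [StarOrderedRing A] (f : A →ₚ[ℂ] ℂ) {y : A} (hy : f (star y * y) = 0)
    (x : A) : f (star y * x) = 0 := by
  have hnorm : ‖f.toPreGNS y‖ = 0 := by simp [preGNS_norm_def, hy]
  have := norm_inner_le_norm (𝕜 := ℂ) (f.toPreGNS y) (f.toPreGNS x)
  rw [hnorm, zero_mul, preGNS_inner_def] at this
  simpa using this

section

variable {A : Type*} [CStarAlgebra A] [PartialOrder A] [StarOrderedRing A]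

lemma sandwich_eq_zero_of_apply_eq_zero {φ : A →L[ℂ] ℂ} (hφ : ∀ x, 0 ≤ x → 0 ≤ φ x) {a : A}
    (ha : 0 ≤ a) (hφa : φ a = 0) : sandwich a φ = 0 := by
  have hs : star (CFC.sqrt a) = CFC.sqrt a := (CFC.sqrt_nonneg a).isSelfAdjoint.star_eq
  ext x
  have := (PositiveLinearMap.mk₀ φ.toLinearMap hφ).apply_star_mul_eq_zero (y := CFC.sqrt a)
    (by simpa [hs, CFC.sqrt_mul_sqrt_self a ha]) (x * CFC.sqrt a)
  rw [hs, ← mul_assoc] at this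
  rw [sandwich_apply]
  exact this

lemma eq_zero_of_sandwich_eq_zero {a : A} (ha : IsUnit (CFC.sqrt a)) {f : A →L[ℂ] ℂ}
    (hf : sandwich a f = 0) : f = 0 := by
  obtain ⟨u, hu⟩ := ha
  ext y
  simpa [sandwich_apply, ← hu, mul_assoc] using congr($hf (↑u⁻¹ * y * ↑u⁻¹))

lemma convex_setOf_realPart_nonneg : Convex ℝ {y : A | 0 ≤ (ℜ y : A)} := by
  intro x hx y hy s t hs ht _
  simp only [Set.mem_ofPred_eq, map_add, map_smul] at *
  exact add_nonneg (smul_nonneg hs hx) (smul_nonneg ht hy)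

lemma one_mem_interior_setOf_realPart_nonneg : (1 : A) ∈ interior {y : A | 0 ≤ (ℜ y : A)} := by
  refine mem_interior_iff_mem_nhds.mpr (Metric.mem_nhds_iff.mpr ⟨1, one_pos, fun y hy => ?_⟩)
  rw [mem_ball_iff_norm] at hy
  have hlow := (ℜ (y - 1)).2.neg_algebraMap_norm_le_self
  have hsmall : ‖ℜ (y - 1)‖ ≤ 1 := ((realPart.norm_le _).trans_lt hy).le
  calc (0 : A) ≤ algebraMap ℝ A (1 - ‖ℜ (y - 1)‖) := algebraMap_nonneg A (by linarith)
    _ ≤ 1 + ℜ (y - 1) := by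
      rw [map_sub, map_one, sub_eq_add_neg]
      gcongr
      exact hlow
    _ = ℜ y := by simp

lemma isUnit_of_mem_interior_setOf_realPart_nonneg {a : A} (ha : IsSelfAdjoint a)
    (h : a ∈ interior {y : A | 0 ≤ (ℜ y : A)}) : IsUnit a := by
  nontriviality A
  obtain ⟨r, hr, hball⟩ := Metric.mem_nhds_iff.mp (mem_interior_iff_mem_nhds.mp h)
  have hmem : a - algebraMap ℝ A (r / 2) ∈ {y : A | 0 ≤ (ℜ y : A)} := by
    apply hball
    rw [mem_ball_iff_norm, sub_sub_cancel_left, norm_neg, norm_algebraMap',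
      Real.norm_of_nonneg (by positivity)]
    linarith
  have hsa : IsSelfAdjoint (a - algebraMap ℝ A (r / 2)) := ha.sub (.algebraMap A (.all _))
  rw [Set.mem_ofPred_eq, hsa.coe_realPart, sub_nonneg] at hmem
  exact CStarAlgebra.isUnit_of_le _ hmem

lemma exists_nonneg_functional_re_apply_nonpos_of_not_isUnit {a : A} (ha : IsSelfAdjoint a)
    (hna : ¬IsUnit a) :
    ∃ φ : A →L[ℂ] ℂ, (∀ x, 0 ≤ x → 0 ≤ φ x) ∧ φ ≠ 0 ∧ (φ a).re ≤ 0 := by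
  obtain ⟨f, hf0, hf⟩ := RCLike.geometric_hahn_banach_of_nonempty_interior_point (𝕜 := ℂ)
    convex_setOf_realPart_nonneg (mt (isUnit_of_mem_interior_setOf_realPart_nonneg ha) hna)
    ⟨1, one_mem_interior_setOf_realPart_nonneg⟩
  simp only [Set.mem_ofPred_eq, RCLike.re_to_complex] at hf
  have hcone : ∀ y : A, 0 ≤ (ℜ y : A) → (f y).re ≤ 0 := by
    intro y hy
    by_contra! hpos
    obtain ⟨n, hn⟩ := exists_nat_gt ((f a).re / (f y).re)
    have := hf ((n : ℝ) • y) (by simpa using smul_nonneg n.cast_nonneg hy)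
    rw [div_lt_iff₀ hpos] at hn
    simp only [ContinuousLinearMap.map_smul_of_tower, Complex.real_smul, Complex.re_ofReal_mul] at this
    linarith
  refine ⟨-f, fun x hx => ?_, neg_ne_zero.mpr hf0, ?_⟩
  · have hℑ : ℑ x = 0 := hx.isSelfAdjoint.imaginaryPart
    have hre := hcone x (by rwa [hx.isSelfAdjoint.coe_realPart])
    have him := hcone (Complex.I • x) (by simp [hℑ])
    have him' := hcone (-(Complex.I • x)) (by simp [hℑ])
    simp only [map_neg, map_smul, smul_eq_mul, Complex.neg_re, Complex.I_mul_re] at him him'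
    rw [Complex.nonneg_iff, neg_apply, Complex.neg_re, Complex.neg_im]
    constructor <;> linarith
  · simpa using hf 0 (by simp)

end

/-- The seminorm `f ↦ ‖√a·f·√a‖` on the dual of `A` is a norm iff
`Re φ(a) > 0` for every nonzero positive continuous linear functional `φ` on `A`. -/
theorem stmt7 {A : Type*} [CStarAlgebra A] [PartialOrder A] [StarOrderedRing A]
    (a : A) (ha : 0 ≤ a) :
    (∀ f : A →L[ℂ] ℂ, sandwich a f = 0 → f = 0) ↔
      (∀ φ : A →L[ℂ] ℂ, (∀ x : A, 0 ≤ x → 0 ≤ φ x) → φ ≠ 0 → 0 < (φ a).re) := by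
  constructor
  · intro hinj φ hφ hφ0
    obtain ⟨hre, him⟩ := Complex.nonneg_iff.mp (hφ a ha)
    refine hre.lt_of_ne fun hre0 => hφ0 (hinj φ ?_)
    exact sandwich_eq_zero_of_apply_eq_zero hφ ha (Complex.ext hre0.symm him.symm)
  · intro hpos f hf
    refine eq_zero_of_sandwich_eq_zero ((CFC.isUnit_sqrt_iff a ha).mpr ?_) hf
    by_contra hna
    obtain ⟨φ, hφ, hφ0, hφa⟩ := exists_nonneg_functional_re_apply_nonpos_of_not_isUnit
      ha.isSelfAdjoint hna
    exact (hpos φ hφ hφ0).not_ge hφa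
end

section
/- Let A be a unital C*-algebra, let a, b ∈ A with 0 ≤ a ≤ b, and let f be a hermitian continuous linear functional on A. Then ‖√a·f·√a‖ ≤ ‖√b·f·√b‖. -/
/-!
The functions `φ(t) = √t / (t + δ)` and `ψ(t) = δ / (t + δ)` satisfy `ψ + √t φ = 1`,
`φ(t)² t ≤ 1` and `ψ(t)² t ≤ δ` for `t ≥ 0`. Since `‖y √a‖² = ‖y a y*‖ ≤ ‖y b y*‖` for
`a ≤ b`, the element `e = φ(b) √a` has `‖e‖ ≤ 1` and `√a - √b e = ψ(b) √a` has norm at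
most `√δ`. So `√a` is a limit of elements `√b e` with `‖e‖ ≤ 1`, and for these
`|f (√b e x e* √b)| ≤ ‖√b·f·√b‖ ‖x‖`; this bound passes to the limit `√a`.
-/

set_option synthInstance.maxHeartbeats 1000000
set_option maxHeartbeats 1000000

open scoped ComplexOrder

section

variable {A : Type*} [CStarAlgebra A] [PartialOrder A] [StarOrderedRing A]

lemma norm_mul_sqrt_sq_le_of_le {a b : A} (ha : 0 ≤ a) (hab : a ≤ b) (y : A) :
    ‖y * CFC.sqrt a‖ ^ 2 ≤ ‖y * b * star y‖ := by
  have hya : y * CFC.sqrt a * star (y * CFC.sqrt a) = y * a * star y := by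
    rw [star_mul, (CFC.sqrt_nonneg a).isSelfAdjoint.star_eq, ← mul_assoc, mul_assoc y,
      CFC.sqrt_mul_sqrt_self a ha]
  rw [sq, ← CStarRing.norm_self_mul_star, hya]
  exact CStarAlgebra.norm_le_norm_of_nonneg_of_le (star_right_conjugate_nonneg ha y)
    (star_right_conjugate_le_conjugate hab y)

lemma norm_cfc_mul_sqrt_sq_le {a b : A} (ha : 0 ≤ a) (hab : a ≤ b) {φ : ℝ → ℝ}
    (hφ : ContinuousOn φ (spectrum ℝ b)) {C : ℝ} (hC : 0 ≤ C)
    (hφC : ∀ t ∈ spectrum ℝ b, φ t ^ 2 * t ≤ C) :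
    ‖cfc φ b * CFC.sqrt a‖ ^ 2 ≤ C := by
  have hb : 0 ≤ b := ha.trans hab
  have hconj : cfc φ b * b * star (cfc φ b) = cfc (fun t => φ t ^ 2 * t) b :=
    calc cfc φ b * b * star (cfc φ b) = cfc φ b * cfc id b * cfc φ b := by
          rw [(cfc_predicate φ b).star_eq, cfc_id ℝ b]
      _ = cfc (fun t => φ t * id t * φ t) b := by rw [cfc_mul .., cfc_mul ..]
      _ = cfc (fun t => φ t ^ 2 * t) b := cfc_congr fun t _ => by simp only [id]; ring
  refine (norm_mul_sqrt_sq_le_of_le ha hab _).trans ?_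
  rw [hconj]
  refine norm_cfc_le hC fun t ht => ?_
  have ht0 : 0 ≤ t := spectrum_nonneg_of_nonneg hb ht
  rw [Real.norm_of_nonneg (by positivity)]
  exact hφC t ht

lemma exists_norm_le_one_norm_sqrt_sub_sqrt_mul_sq_le {a b : A} (ha : 0 ≤ a) (hab : a ≤ b)
    {δ : ℝ} (hδ : 0 < δ) :
    ∃ e : A, ‖e‖ ≤ 1 ∧ ‖CFC.sqrt a - CFC.sqrt b * e‖ ^ 2 ≤ δ := by
  have hb : 0 ≤ b := ha.trans hab
  have hspec : ∀ t ∈ spectrum ℝ b, 0 ≤ t := fun t ht => spectrum_nonneg_of_nonneg hb ht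
  have hden : ∀ t ∈ spectrum ℝ b, t + δ ≠ 0 := fun t ht => by linarith [hspec t ht]
  set φ : ℝ → ℝ := fun t => √t / (t + δ)
  set ψ : ℝ → ℝ := fun t => δ / (t + δ)
  have hφ : ContinuousOn φ (spectrum ℝ b) :=
    Real.continuous_sqrt.continuousOn.div (by fun_prop) hden
  have hψ : ContinuousOn ψ (spectrum ℝ b) := continuousOn_const.div (by fun_prop) hden
  have hψφ : cfc ψ b + CFC.sqrt b * cfc φ b = 1 := by
    rw [CFC.sqrt_eq_real_sqrt b hb, cfcₙ_eq_cfc, ← cfc_mul .., ← cfc_add .., ← cfc_const_one ℝ b]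
    refine cfc_congr fun t ht => ?_
    simp only [φ, ψ]
    field_simp [hden t ht]
    rw [Real.sq_sqrt (hspec t ht)]
    ring
  refine ⟨cfc φ b * CFC.sqrt a, ?_, ?_⟩
  · rw [← sq_le_one_iff₀ (norm_nonneg _)]
    refine norm_cfc_mul_sqrt_sq_le ha hab hφ zero_le_one fun t ht => ?_
    have ht0 := hspec t ht
    rw [div_pow, Real.sq_sqrt ht0, div_mul_eq_mul_div, div_le_one (by positivity)]
    nlinarith
  · rw [← mul_assoc, eq_sub_of_add_eq' hψφ, sub_mul, one_mul, sub_sub_cancel]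
    refine norm_cfc_mul_sqrt_sq_le ha hab hψ hδ.le fun t ht => ?_
    have ht0 := hspec t ht
    rw [div_pow, div_mul_eq_mul_div, div_le_iff₀ (by positivity)]
    nlinarith [mul_nonneg hδ.le ht0, sq_nonneg t]

lemma sqrt_mem_closure_sqrt_mul_closedBall {a b : A} (ha : 0 ≤ a) (hab : a ≤ b) :
    CFC.sqrt a ∈ closure ((CFC.sqrt b * ·) '' Metric.closedBall (0 : A) 1) := by
  rw [Metric.mem_closure_iff]
  intro ε hε
  obtain ⟨e, he, hae⟩ :=
    exists_norm_le_one_norm_sqrt_sub_sqrt_mul_sq_le ha hab (δ := (ε / 2) ^ 2) (by positivity)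
  refine ⟨_, ⟨e, mem_closedBall_zero_iff.mpr he, rfl⟩, ?_⟩
  rw [dist_eq_norm]
  linarith [(pow_le_pow_iff_left₀ (norm_nonneg _) (by positivity) two_ne_zero).mp hae]

end

theorem stmt11_general {A : Type*} [CStarAlgebra A] [PartialOrder A] [StarOrderedRing A]
    (a b : A) (ha : 0 ≤ a) (hab : a ≤ b) (f : A →L[ℂ] ℂ) :
    ‖sandwich a f‖ ≤ ‖sandwich b f‖ := by
  refine ContinuousLinearMap.opNorm_le_bound _ (norm_nonneg _) fun x => ?_
  set S := {s : A | ‖f (s * x * star s)‖ ≤ ‖sandwich b f‖ * ‖x‖}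
  have hS : IsClosed S := isClosed_le (by fun_prop) continuous_const
  have hball : (CFC.sqrt b * ·) '' Metric.closedBall (0 : A) 1 ⊆ S := by
    rintro _ ⟨e, he, rfl⟩
    rw [mem_closedBall_zero_iff] at he
    have hsandwich : f (CFC.sqrt b * e * x * star (CFC.sqrt b * e)) =
        sandwich b f (e * x * star e) := by
      simp only [sandwich_apply, star_mul, (CFC.sqrt_nonneg b).isSelfAdjoint.star_eq, mul_assoc]
    have hex : ‖e * x * star e‖ ≤ ‖x‖ := calc
      ‖e * x * star e‖ ≤ ‖e‖ * ‖x‖ * ‖e‖ := by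
        simpa only [norm_star] using norm_mul₃_le (a := e) (b := x) (c := star e)
      _ ≤ 1 * ‖x‖ * 1 := by gcongr
      _ = ‖x‖ := by ring
    show ‖_‖ ≤ _
    rw [hsandwich]
    exact ((sandwich b f).le_opNorm _).trans (by gcongr)
  have hsqrt : ‖f (CFC.sqrt a * x * star (CFC.sqrt a))‖ ≤ ‖sandwich b f‖ * ‖x‖ :=
    hS.closure_subset_iff.mpr hball (sqrt_mem_closure_sqrt_mul_closedBall ha hab)
  rwa [(CFC.sqrt_nonneg a).isSelfAdjoint.star_eq, ← sandwich_apply] at hsqrt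

/-- For `0 ≤ a ≤ b` in a unital C*-algebra `A` and a hermitian
continuous linear functional `f` on `A`, `‖√a·f·√a‖ ≤ ‖√b·f·√b‖`. -/
theorem stmt11 {A : Type*} [CStarAlgebra A] [PartialOrder A] [StarOrderedRing A]
    (a b : A) (ha : 0 ≤ a) (hab : a ≤ b) (f : A →L[ℂ] ℂ)
    (hf : ∀ x : A, f (star x) = starRingEnd ℂ (f x)) :
    ‖sandwich a f‖ ≤ ‖sandwich b f‖ :=
  stmt11_general a b ha hab f
end
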